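/- arXiv:1204.0998 — 2 statements merged into one kernel-verified Lean document; each statement's English description precedes it below -/
import Mathlib

section
/- Let g be analytic near k₀ ∈ ℝ with g(k₀) > 0 and g real on the reals, m ≥ 2 an integer, and h(k) = (k−k₀)·g(k)^{1/m} as above with local inverse h^{-1} defined on a ball N centered at 0. Then h^{-1} maps N ∩ {Im ν > 0} into the open upper half-plane and N ∩ {Im ν < 0} into the open lower half-plane. -/
open Complex Set Metric Filter Topology

/-!
Put `φ k = (k - k₀) g(k)^{1/m}`, so that `φ (h⁻¹ ν) = ν`. Near `k₀` the function `φ` is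
holomorphic, real on the real axis, and `Re φ' > 0` (since `φ'(k₀) = g(k₀)^{1/m} > 0`). Along
each vertical segment `t ↦ x + t i` the derivative of `Im φ` is `Re φ' > 0`, so `Im φ` is
strictly increasing there and vanishes at `t = 0`: hence `Im φ(k)` has the sign of `Im k`.
Applied to `k = h⁻¹ ν`, this says that `Im h⁻¹(ν)` has the sign of `Im ν`.
-/

theorem HasDerivAt.im_comp_vertical {f : ℂ → ℂ} {f' : ℂ} (x t : ℝ)
    (hf : HasDerivAt f f' (x + t * I)) :
    HasDerivAt (fun s : ℝ => (f (x + s * I)).im) f'.re t := by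
  have hline : HasDerivAt (fun w : ℂ => (x : ℂ) + w * I) I t := by
    simpa using ((hasDerivAt_id (t : ℂ)).mul_const I).const_add (x : ℂ)
  -- `Im w = Re (-I * w)`, which brings us to `HasDerivAt.real_of_complex`
  simpa using ((hf.comp (t : ℂ) hline).const_mul (-I)).real_of_complex

theorem Convex.preimage_add_mul_I {U : Set ℂ} (hU : Convex ℝ U) (x : ℝ) :
    Convex ℝ {t : ℝ | (x : ℂ) + t * I ∈ U} := by
  intro s hs t ht a b ha hb hab
  show (x : ℂ) + ↑(a • s + b • t) * I ∈ U
  convert hU hs ht ha hb hab using 1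
  have hab' : (a : ℂ) + b = 1 := by exact_mod_cast hab
  simp only [smul_eq_mul, real_smul, ofReal_add, ofReal_mul]
  linear_combination (x : ℂ) * hab'.symm

theorem strictMonoOn_im_comp_vertical {f : ℂ → ℂ} {U : Set ℂ} (hU : Convex ℝ U)
    (hUo : IsOpen U) (hf : DifferentiableOn ℂ f U) (hf' : ∀ z ∈ U, 0 < (deriv f z).re)
    (x : ℝ) :
    StrictMonoOn (fun t : ℝ => (f (x + t * I)).im) {t : ℝ | (x : ℂ) + t * I ∈ U} := by
  have hderiv : ∀ t ∈ {t : ℝ | (x : ℂ) + t * I ∈ U},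
      HasDerivAt (fun s : ℝ => (f (x + s * I)).im) (deriv f (x + t * I)).re t := fun t ht =>
    (hf.differentiableAt (hUo.mem_nhds ht)).hasDerivAt.im_comp_vertical x t
  have hopen : IsOpen {t : ℝ | (x : ℂ) + t * I ∈ U} := hUo.preimage (by fun_prop)
  refine strictMonoOn_of_deriv_pos (hU.preimage_add_mul_I x)
    (fun t ht => (hderiv t ht).continuousAt.continuousWithinAt) fun t ht => ?_
  rw [hopen.interior_eq] at ht
  rw [(hderiv t ht).deriv]
  exact hf' _ ht

theorem sign_im_eq_of_re_deriv_pos {f : ℂ → ℂ} {x₀ ρ : ℝ}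
    (hf : DifferentiableOn ℂ f (ball (x₀ : ℂ) ρ))
    (hf' : ∀ z ∈ ball (x₀ : ℂ) ρ, 0 < (deriv f z).re)
    (hreal : ∀ x : ℝ, (x : ℂ) ∈ ball (x₀ : ℂ) ρ → (f x).im = 0)
    {z : ℂ} (hz : z ∈ ball (x₀ : ℂ) ρ) :
    SignType.sign (f z).im = SignType.sign z.im := by
  have hmono := strictMonoOn_im_comp_vertical (convex_ball _ _) isOpen_ball hf hf' z.re
  have hre : (z.re : ℂ) ∈ ball (x₀ : ℂ) ρ := by
    rw [mem_ball, dist_eq] at hz ⊢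
    rw [← ofReal_sub, norm_real, Real.norm_eq_abs]
    simpa using (abs_re_le_norm (z - x₀)).trans_lt hz
  have h0 : (0 : ℝ) ∈ {t : ℝ | (z.re : ℂ) + t * I ∈ ball (x₀ : ℂ) ρ} := by
    simpa using hre
  have hz' : z.im ∈ {t : ℝ | (z.re : ℂ) + t * I ∈ ball (x₀ : ℂ) ρ} := by
    simpa only [mem_ofPred_eq, re_add_im] using hz
  have him0 : (f (z.re + (0 : ℝ) * I)).im = 0 := by simpa using hreal z.re hre
  rw [show (f z).im = (f (z.re + z.im * I)).im by rw [re_add_im]]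
  rcases lt_trichotomy z.im 0 with hneg | hzero | hpos
  · rw [sign_neg hneg, sign_neg (him0 ▸ hmono hz' h0 hneg)]
  · rw [hzero, him0]
  · rw [sign_pos hpos, sign_pos (him0 ▸ hmono h0 hz' hpos)]

theorem AnalyticAt.eventually_sign_im_eq {f : ℂ → ℂ} {x₀ : ℝ} (hf : AnalyticAt ℂ f x₀)
    (hf' : 0 < (deriv f x₀).re) (hreal : ∀ᶠ x : ℝ in 𝓝 x₀, (f x).im = 0) :
    ∀ᶠ z in 𝓝 (x₀ : ℂ), SignType.sign (f z).im = SignType.sign z.im := by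
  have hnear : ∀ᶠ z in 𝓝 (x₀ : ℂ), AnalyticAt ℂ f z ∧ 0 < (deriv f z).re :=
    hf.eventually_analyticAt.and
      ((continuous_re.continuousAt.comp hf.deriv.continuousAt).eventually_const_lt hf')
  obtain ⟨ρ, hρ, hball⟩ := eventually_nhds_iff_ball.mp hnear
  obtain ⟨ε, hε, hreal⟩ := eventually_nhds_iff_ball.mp hreal
  refine eventually_nhds_iff_ball.mpr ⟨min ρ ε, lt_min hρ hε, fun z hz => ?_⟩
  have hsub : ball (x₀ : ℂ) (min ρ ε) ⊆ ball (x₀ : ℂ) ρ :=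
    ball_subset_ball (min_le_left _ _)
  refine sign_im_eq_of_re_deriv_pos
    (fun w hw => (hball w (hsub hw)).1.differentiableAt.differentiableWithinAt)
    (fun w hw => (hball w (hsub hw)).2) (fun x hx => hreal x ?_) hz
  rw [mem_ball, isometry_ofReal.dist_eq] at hx
  exact mem_ball.mpr (hx.trans_le (min_le_right _ _))

theorem cpow_ofReal_im_eq_zero {a : ℂ} (ha : 0 ≤ a.re) (ha' : a.im = 0) (y : ℝ) :
    (a ^ (y : ℂ)).im = 0 := by
  simp [cpow_ofReal_im, arg_eq_zero_iff.mpr ⟨ha, ha'⟩]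

theorem cpow_ofReal_re_pos {a : ℂ} (ha : 0 < a.re) (ha' : a.im = 0) (y : ℝ) :
    0 < (a ^ (y : ℂ)).re := by
  have ha0 : a ≠ 0 := fun h => by simp [h] at ha
  simpa [cpow_ofReal_re, arg_eq_zero_iff.mpr ⟨ha.le, ha'⟩] using
    Real.rpow_pos_of_pos (norm_pos_iff.mpr ha0) y

theorem stmt10_general (g : ℂ → ℂ) (k₀ : ℝ) (m : ℕ)
    (han : AnalyticAt ℂ g (k₀ : ℂ))
    (hreal : ∀ x : ℝ, (g x).im = 0)
    (hpos : 0 < (g (k₀ : ℂ)).re)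
    (hinv : ℂ → ℂ) (r : ℝ) (hr : 0 < r)
    (hinv_an : AnalyticOnNhd ℂ hinv (ball (0 : ℂ) r))
    (hinv0 : hinv 0 = (k₀ : ℂ))
    (hinv_right : ∀ ν ∈ ball (0 : ℂ) r,
      (hinv ν - (k₀ : ℂ)) * g (hinv ν) ^ ((1 : ℂ) / m) = ν) :
    ∃ r' : ℝ, 0 < r' ∧ r' ≤ r ∧ ∀ ν ∈ ball (0 : ℂ) r',
      (0 < ν.im → 0 < (hinv ν).im) ∧ (ν.im < 0 → (hinv ν).im < 0) := by
  set φ : ℂ → ℂ := fun k => (k - k₀) * g k ^ ((1 : ℂ) / m) with hφ_def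
  have hexp : (1 : ℂ) / m = ((1 / m : ℝ) : ℂ) := by push_cast; rfl
  have hw : AnalyticAt ℂ (fun k => g k ^ ((1 : ℂ) / m)) k₀ :=
    han.cpow analyticAt_const (Or.inl hpos)
  have hφ' : 0 < (deriv φ k₀).re := by
    have hd : HasDerivAt φ (g k₀ ^ ((1 : ℂ) / m)) k₀ := by
      simpa [hφ_def] using ((hasDerivAt_id' (k₀ : ℂ)).sub_const (k₀ : ℂ)).fun_mul
        hw.differentiableAt.hasDerivAt
    rw [hd.deriv, hexp]
    exact cpow_ofReal_re_pos hpos (hreal k₀) _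
  have hφreal : ∀ᶠ x : ℝ in 𝓝 k₀, (φ x).im = 0 :=
    ((continuous_ofReal.tendsto k₀).eventually
      ((continuous_re.continuousAt.comp han.continuousAt).eventually_const_lt hpos)).mono
      fun x hx => by
        simp only [hφ_def, hexp, mul_im, ← ofReal_sub, ofReal_re, ofReal_im, zero_mul, add_zero,
          cpow_ofReal_im_eq_zero hx.le (hreal x), mul_zero]
  have hφ : AnalyticAt ℂ φ k₀ := (analyticAt_id.sub analyticAt_const).mul hw
  have hsign := hφ.eventually_sign_im_eq hφ' hφreal
  have hinv_tendsto : Tendsto hinv (𝓝 0) (𝓝 (k₀ : ℂ)) :=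
    hinv0 ▸ (hinv_an 0 (mem_ball_self hr)).continuousAt
  obtain ⟨r', hr', hball⟩ := eventually_nhds_iff_ball.mp
    ((hinv_tendsto.eventually hsign).and (ball_mem_nhds (0 : ℂ) hr))
  refine ⟨min r' r, lt_min hr' hr, min_le_right _ _, fun ν hν => ?_⟩
  obtain ⟨hν_sign, hν_r⟩ := hball ν (ball_subset_ball (min_le_left _ _) hν)
  rw [show φ (hinv ν) = ν from hinv_right ν hν_r] at hν_sign
  rw [← sign_eq_one_iff, ← sign_eq_one_iff, ← sign_eq_neg_one_iff, ← sign_eq_neg_one_iff,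
    hν_sign]
  exact ⟨id, id⟩

/-- The local inverse h⁻¹ of h(k) = (k−k₀)·g(k)^{1/m} maps the upper half-plane
into the upper half-plane and the lower half-plane into the lower half-plane. -/
theorem stmt10 (g : ℂ → ℂ) (k₀ : ℝ) (m : ℕ) (hm : 2 ≤ m)
    (han : AnalyticAt ℂ g (k₀ : ℂ))
    (hreal : ∀ x : ℝ, (g x).im = 0)
    (hpos : 0 < (g (k₀ : ℂ)).re)
    (hinv : ℂ → ℂ) (r : ℝ) (hr : 0 < r)
    (hinv_an : AnalyticOnNhd ℂ hinv (ball (0 : ℂ) r))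
    (hinv0 : hinv 0 = (k₀ : ℂ))
    (hinv_right : ∀ ν ∈ ball (0 : ℂ) r,
      (hinv ν - (k₀ : ℂ)) * g (hinv ν) ^ ((1 : ℂ) / m) = ν) :
    ∃ r' : ℝ, 0 < r' ∧ r' ≤ r ∧ ∀ ν ∈ ball (0 : ℂ) r',
      (0 < ν.im → 0 < (hinv ν).im) ∧ (ν.im < 0 → (hinv ν).im < 0) :=
  stmt10_general g k₀ m han hreal hpos hinv r hr hinv_an hinv0 hinv_right
end

section
/- Under assumption ‖ε₁‖_∞ < (μ₁ − μ₀)·inf ε₀ / μ₀ with ε₁ ≥ 0 not a.e. zero, and given: (i) κ_max is continuous and non-decreasing on (μ₀, μ₁), (ii) there exists λ' ∈ (μ₀, μ₁) with κ_max(λ') < 1, and (iii) κ_max(λ) → ∞ as λ ↗ μ₁; then there exists λ ∈ (λ', μ₁) with κ_max(λ) = 1, and hence λ is an eigenvalue of the perturbed operator L(k_x) in the gap (μ₀, μ₁). -/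
open Set Filter Topology

theorem ContinuousOn.exists_Ioo_eq_of_tendsto_atTop {α δ : Type*}
    [ConditionallyCompleteLinearOrder α] [TopologicalSpace α] [OrderTopology α] [DenselyOrdered α]
    [LinearOrder δ] [TopologicalSpace δ] [OrderClosedTopology δ]
    {f : α → δ} {a b : α} {c : δ} (hab : a < b) (hf : ContinuousOn f (Ico a b))
    (ha : f a < c) (hb : Tendsto f (𝓝[<] b) atTop) : ∃ x ∈ Ioo a b, f x = c := by
  have : (𝓝[Ico a b] b).NeBot := by
    rw [nhdsWithin_Ico_eq_nhdsLT hab]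
    exact nhdsLT_neBot_of_exists_lt ⟨a, hab⟩
  obtain ⟨x, hx, hfx⟩ := isPreconnected_Ico.intermediate_value_Ici (l := 𝓝[Ico a b] b)
    (left_mem_Ico.2 hab) inf_le_right hf (by rwa [nhdsWithin_Ico_eq_nhdsLT hab]) ha.le
  refine ⟨x, ⟨hx.1.lt_of_ne ?_, hx.2⟩, hfx⟩
  rintro rfl
  exact ha.ne hfx

theorem stmt18_general (μ₀ μ₁ lam' : ℝ) (κmax : ℝ → ℝ)
    (isEigenvalueOfL : ℝ → Prop)
    (hcont : ContinuousOn κmax (Ioo μ₀ μ₁))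
    (hlam' : lam' ∈ Ioo μ₀ μ₁) (hκ' : κmax lam' < 1)
    (hblow : Tendsto κmax (nhdsWithin μ₁ (Iio μ₁)) atTop)
    -- λ ∈ (μ₀,μ₁) is an eigenvalue of L(k_x) whenever κ_max(λ) = 1
    (heig : ∀ lam ∈ Ioo μ₀ μ₁, κmax lam = 1 → isEigenvalueOfL lam) :
    ∃ lam : ℝ, lam ∈ Ioo lam' μ₁ ∧ κmax lam = 1 ∧ isEigenvalueOfL lam := by
  have hsub : Ico lam' μ₁ ⊆ Ioo μ₀ μ₁ := Ico_subset_Ioo_left hlam'.1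
  obtain ⟨lam, hlam, hκ⟩ :=
    (hcont.mono hsub).exists_Ioo_eq_of_tendsto_atTop hlam'.2 hκ' hblow
  exact ⟨lam, hlam, hκ, heig lam (hsub (Ioo_subset_Ico_self hlam)) hκ⟩

/-- Theorem 4.3 (conclusion via the intermediate value argument): under the
smallness condition on the perturbation, κ_max attains the value 1 in (λ',μ₁),
producing an eigenvalue of the perturbed operator L(k_x) in the gap. -/
theorem stmt18 (μ₀ μ₁ normε₁ infε₀ lam' : ℝ) (κmax : ℝ → ℝ)
    (isEigenvalueOfL : ℝ → Prop)
    (hμ₀ : 0 < μ₀) (hgap : μ₀ < μ₁) (hinf : 0 < infε₀)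
    (hε₁ : 0 ≤ normε₁)
    (hpert : normε₁ < (μ₁ - μ₀) * infε₀ / μ₀)
    (hcont : ContinuousOn κmax (Ioo μ₀ μ₁))
    (hmono : MonotoneOn κmax (Ioo μ₀ μ₁))
    (hlam' : lam' ∈ Ioo μ₀ μ₁) (hκ' : κmax lam' < 1)
    (hblow : Tendsto κmax (nhdsWithin μ₁ (Iio μ₁)) atTop)
    -- λ ∈ (μ₀,μ₁) is an eigenvalue of L(k_x) whenever κ_max(λ) = 1
    (heig : ∀ lam ∈ Ioo μ₀ μ₁, κmax lam = 1 → isEigenvalueOfL lam) :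
    ∃ lam : ℝ, lam ∈ Ioo lam' μ₁ ∧ κmax lam = 1 ∧ isEigenvalueOfL lam :=
  stmt18_general μ₀ μ₁ lam' κmax isEigenvalueOfL hcont hlam' hκ' hblow heig
end
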